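/- arXiv:2207.08706 — 4 statements merged into one kernel-verified Lean document; each statement's English description precedes it below -/
import Mathlib

section
/- Let R be a commutative ring and M an R-module. Write N = M × M, and let e₁, e₂, s : N → N be the R-linear maps e₁(x₁,x₂) = (x₁,0), e₂(x₁,x₂) = (0,x₂), s(x₁,x₂) = (x₂,x₁). Let ψ : N × N → R be an alternating R-bilinear form satisfying ψ(e₁ x, y) = ψ(x, e₂ y) and ψ(s x, y) = −ψ(x, s y) for all x, y ∈ N. Then there exists a unique R-bilinear form φ : M × M → R such that ψ((x₁,x₂),(y₁,y₂)) = φ(x₂,y₁) − φ(x₁,y₂) for all x₁, x₂, y₁, y₂ ∈ M; moreover this φ is symmetric, and if ψ is nondegenerate then φ is nondegenerate. -/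
/-!
Split `M × M = (M × 0) ⊕ (0 × M)`. The relation for `e₁, e₂` makes both summands isotropic, so `ψ`
is determined by its two off-diagonal blocks, and the relation for `s` identifies one of them with
minus the other; hence `ψ` is recovered from `φ(a, b) = ψ((0, a), (b, 0))`. Skew-symmetry of the
alternating form `ψ`, combined once more with the relation for `s`, makes `φ` symmetric. Finally,
if `φ(a, -) = 0` then `(0, a)` lies in the left kernel of `ψ`, and if `φ(-, b) = 0` then `(b, 0)`
lies in its right kernel.
-/

namespace LinearMap

variable {R M : Type*} [CommRing R] [AddCommGroup M] [Module R M]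

def prodOffDiag (ψ : (M × M) →ₗ[R] (M × M) →ₗ[R] R) : M →ₗ[R] M →ₗ[R] R :=
  (ψ.comp (inr R M M)).compl₂ (inl R M M)

@[simp]
theorem prodOffDiag_apply (ψ : (M × M) →ₗ[R] (M × M) →ₗ[R] R) (a b : M) :
    ψ.prodOffDiag a b = ψ (0, a) (b, 0) :=
  rfl

variable {ψ : (M × M) →ₗ[R] (M × M) →ₗ[R] R}

section Isotropic

variable (he : ∀ x y : M × M, ψ (x.1, 0) y = ψ x (0, y.2))
include he

theorem apply_inl_inl_eq_zero (a b : M) : ψ (a, 0) (b, 0) = 0 := by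
  simpa [Prod.mk_zero_zero] using he (a, 0) (b, 0)

theorem apply_inr_inr_eq_zero (a b : M) : ψ (0, a) (0, b) = 0 := by
  simpa [Prod.mk_zero_zero] using (he (0, a) (0, b)).symm

end Isotropic

theorem apply_inl_inr_eq_neg (hs : ∀ x y : M × M, ψ (x.2, x.1) y = -ψ x (y.2, y.1))
    (a b : M) : ψ (a, 0) (0, b) = -ψ (0, a) (b, 0) := by
  simpa [neg_eq_iff_eq_neg] using (hs (a, 0) (b, 0)).symm

theorem apply_eq_prodOffDiag_sub (he : ∀ x y : M × M, ψ (x.1, 0) y = ψ x (0, y.2))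
    (hs : ∀ x y : M × M, ψ (x.2, x.1) y = -ψ x (y.2, y.1)) (x₁ x₂ y₁ y₂ : M) :
    ψ (x₁, x₂) (y₁, y₂) = ψ.prodOffDiag x₂ y₁ - ψ.prodOffDiag x₁ y₂ := by
  have mk_eq_add : ∀ a b : M, ((a, b) : M × M) = (a, 0) + (0, b) := by simp
  rw [mk_eq_add x₁, mk_eq_add y₁]
  simp only [map_add, add_apply, apply_inl_inl_eq_zero he, apply_inr_inr_eq_zero he,
    apply_inl_inr_eq_neg hs, prodOffDiag_apply]
  ring

theorem prodOffDiag_isSymm (halt : ψ.IsAlt)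
    (hs : ∀ x y : M × M, ψ (x.2, x.1) y = -ψ x (y.2, y.1)) : ψ.prodOffDiag.IsSymm := by
  refine isSymm_def.2 fun a b => ?_
  simp only [RingHom.id_apply, prodOffDiag_apply]
  rw [← halt.neg, apply_inl_inr_eq_neg hs, neg_neg]

section Decomposition

variable {φ : M →ₗ[R] M →ₗ[R] R}
  (hφ : ∀ x₁ x₂ y₁ y₂ : M, ψ (x₁, x₂) (y₁, y₂) = φ x₂ y₁ - φ x₁ y₂)
include hφ

theorem eq_prodOffDiag_of_apply_eq_sub : φ = ψ.prodOffDiag := by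
  ext a b
  simpa using (hφ 0 a b 0).symm

theorem SeparatingLeft.of_apply_eq_sub (h : ψ.SeparatingLeft) : φ.SeparatingLeft := by
  intro a ha
  have : ((0 : M), a) = 0 := h _ fun ⟨y₁, y₂⟩ => by simp [hφ, ha]
  exact (Prod.mk_eq_zero.1 this).2

theorem SeparatingRight.of_apply_eq_sub (h : ψ.SeparatingRight) : φ.SeparatingRight := by
  intro b hb
  have : (b, (0 : M)) = 0 := h _ fun ⟨x₁, x₂⟩ => by simp [hφ, hb]
  exact (Prod.mk_eq_zero.1 this).1

end Decomposition

end LinearMap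

open LinearMap in
/-- Morita-type reduction of an alternating form on `N = M × M`
with `e₁/e₂/s`-compatibilities to a symmetric form `φ` on `M`. -/
theorem stmt_0 {R M : Type*} [CommRing R] [AddCommGroup M] [Module R M]
    (ψ : (M × M) →ₗ[R] (M × M) →ₗ[R] R)
    (halt : ∀ x : M × M, ψ x x = 0)
    (he : ∀ x y : M × M, ψ (x.1, 0) y = ψ x (0, y.2))
    (hs : ∀ x y : M × M, ψ (x.2, x.1) y = - ψ x (y.2, y.1)) :
    (∃! φ : M →ₗ[R] M →ₗ[R] R,
        ∀ x₁ x₂ y₁ y₂ : M, ψ (x₁, x₂) (y₁, y₂) = φ x₂ y₁ - φ x₁ y₂) ∧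
      ∀ φ : M →ₗ[R] M →ₗ[R] R,
        (∀ x₁ x₂ y₁ y₂ : M, ψ (x₁, x₂) (y₁, y₂) = φ x₂ y₁ - φ x₁ y₂) →
          (∀ a b : M, φ a b = φ b a) ∧
            (((∀ x : M × M, (∀ y, ψ x y = 0) → x = 0) ∧
                (∀ y : M × M, (∀ x, ψ x y = 0) → y = 0)) →
              ((∀ a : M, (∀ b, φ a b = 0) → a = 0) ∧
                (∀ b : M, (∀ a, φ a b = 0) → b = 0))) := by
  refine ⟨⟨ψ.prodOffDiag, apply_eq_prodOffDiag_sub he hs,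
    fun _ hφ => eq_prodOffDiag_of_apply_eq_sub hφ⟩, fun φ hφ => ⟨fun a b => ?_, ?_⟩⟩
  · rw [eq_prodOffDiag_of_apply_eq_sub hφ]
    exact (prodOffDiag_isSymm halt hs).eq a b
  · rintro ⟨hleft, hright⟩
    exact ⟨SeparatingLeft.of_apply_eq_sub hφ hleft, SeparatingRight.of_apply_eq_sub hφ hright⟩
end

section
/- Let p be a prime, k a perfect field of characteristic p, K the fraction field of the ring W(k) of p-typical Witt vectors of k, and σ : K → K the field automorphism induced by the Witt vector Frobenius of W(k). Let M be the K-vector space with basis x₀, y₀, z₀, x₁, y₁, z₁, and let F : M → M be the σ-semilinear additive map (F(c·m) = σ(c)·F(m) for c ∈ K, m ∈ M) determined by F(x₀) = x₁, F(y₀) = y₁, F(z₀) = p·z₁, F(x₁) = z₀, F(y₁) = p·y₀, F(z₁) = p·x₀. Then the set of elements m in the K-span of {x₀, y₀, z₀} satisfying F(F(m)) = p·m is exactly { p·α·x₀ + β·y₀ + σ²(α)·z₀ : α, β ∈ K, σ⁴(α) = α, σ²(β) = β }. -/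
/-!
On the span of `x₀, y₀, z₀`, the map `F²` acts on coordinates by
`(a, c, d) ↦ (p² σ²(d), p σ²(c), σ²(a))`. Comparing coordinates, `F² m = p m` says
`a = p σ²(d)`, `σ²(c) = c` and `σ⁴(d) = d`, and `α = σ²(d)` (so that `d = σ²(α)`)
parametrizes the solutions.
-/

open Module

lemma Module.Basis.smul_add_smul_add_smul_inj {ι R M : Type*} [Semiring R] [AddCommMonoid M]
    [Module R M] (b : Basis ι R M) {i j l : ι} (hij : i ≠ j) (hil : i ≠ l) (hjl : j ≠ l)
    {a c d a' c' d' : R} :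
    a • b i + c • b j + d • b l = a' • b i + c' • b j + d' • b l ↔
      a = a' ∧ c = c' ∧ d = d' := by
  refine ⟨fun h ↦ ?_, by rintro ⟨rfl, rfl, rfl⟩; rfl⟩
  have coord (x : ι) := DFunLike.congr_fun (congrArg b.repr h) x
  simpa [Finsupp.single_apply, hij, hil, hjl, hij.symm, hil.symm, hjl.symm]
    using And.intro (coord i) (And.intro (coord j) (coord l))

section

variable {K M : Type*} [Field K] [AddCommGroup M] [Module K M] (σ : K ≃+* K)
  (b : Basis (Fin 6) K M) (F : M →+ M) {q : K}

lemma apply_apply_smul_add_smul_add_smul (hq : σ q = q)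
    (hsemi : ∀ (c : K) (m : M), F (c • m) = σ c • F m)
    (h0 : F (b 0) = b 3) (h1 : F (b 1) = b 4) (h2 : F (b 2) = q • b 5)
    (h3 : F (b 3) = b 2) (h4 : F (b 4) = q • b 1) (h5 : F (b 5) = q • b 0) (a c d : K) :
    F (F (a • b 0 + c • b 1 + d • b 2)) =
      (q * q * σ (σ d)) • b 0 + (q * σ (σ c)) • b 1 + σ (σ a) • b 2 := by
  simp only [map_add, hsemi, h0, h1, h2, h3, h4, h5, smul_smul, map_mul, hq]
  module

lemma apply_apply_eq_smul_iff (hq : σ q = q) (hq0 : q ≠ 0)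
    (hsemi : ∀ (c : K) (m : M), F (c • m) = σ c • F m)
    (h0 : F (b 0) = b 3) (h1 : F (b 1) = b 4) (h2 : F (b 2) = q • b 5)
    (h3 : F (b 3) = b 2) (h4 : F (b 4) = q • b 1) (h5 : F (b 5) = q • b 0) (a c d : K) :
    F (F (a • b 0 + c • b 1 + d • b 2)) = q • (a • b 0 + c • b 1 + d • b 2) ↔
      a = q * σ (σ d) ∧ σ (σ c) = c ∧ σ (σ (σ (σ d))) = d := by
  rw [apply_apply_smul_add_smul_add_smul σ b F hq hsemi h0 h1 h2 h3 h4 h5, smul_add, smul_add,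
    smul_smul, smul_smul, smul_smul, b.smul_add_smul_add_smul_inj (by decide) (by decide)
    (by decide), mul_assoc, mul_right_inj' hq0, mul_right_inj' hq0, eq_comm (a := q * σ (σ d))]
  constructor
  · rintro ⟨rfl, hc, hd⟩
    simp only [map_mul, hq, mul_right_inj' hq0] at hd
    exact ⟨rfl, hc, hd⟩
  · rintro ⟨rfl, hc, hd⟩
    exact ⟨rfl, hc, by rw [map_mul, map_mul, hq, hq, hd]⟩

end

theorem stmt_3_general (p : ℕ) [Fact p.Prime] (k : Type*) [Field k] [CharP k p]
    (K : Type*) [Field K] [Algebra (WittVector p k) K]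
    [IsFractionRing (WittVector p k) K]
    (σ : K ≃+* K)
    {M : Type*} [AddCommGroup M] [Module K M] (b : Module.Basis (Fin 6) K M)
    (F : M →+ M)
    (hsemi : ∀ (c : K) (m : M), F (c • m) = σ c • F m)
    (h0 : F (b 0) = b 3) (h1 : F (b 1) = b 4) (h2 : F (b 2) = (p : K) • b 5)
    (h3 : F (b 3) = b 2) (h4 : F (b 4) = (p : K) • b 1)
    (h5 : F (b 5) = (p : K) • b 0) :
    {m : M | m ∈ Submodule.span K ({b 0, b 1, b 2} : Set M) ∧
        F (F m) = (p : K) • m} =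
      {m : M | ∃ α β : K, σ (σ (σ (σ α))) = α ∧ σ (σ β) = β ∧
        m = ((p : K) * α) • b 0 + β • b 1 + σ (σ α) • b 2} := by
  have hp0 : (p : K) ≠ 0 := by
    simpa using (IsFractionRing.injective (WittVector p k) K).ne (WittVector.p_nonzero p k)
  have hF := apply_apply_eq_smul_iff σ b F (map_natCast σ p) hp0 hsemi h0 h1 h2 h3 h4 h5
  ext m
  simp only [Set.mem_ofPred_eq, Submodule.mem_span_triple]
  constructor
  · rintro ⟨⟨a, c, d, rfl⟩, hm⟩
    obtain ⟨rfl, hc, hd⟩ := (hF a c d).1 hm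
    exact ⟨σ (σ d), c, by rw [hd], hc, by rw [hd]⟩
  · rintro ⟨α, β, hα, hβ, rfl⟩
    exact ⟨⟨_, _, _, rfl⟩, (hF _ _ _).2 ⟨by rw [hα], hβ, by rw [hα]⟩⟩

/-- computation of the supersingular skeleton
`{m ∈ span(x₀,y₀,z₀) | F²(m) = p·m}` of the key height-6 Dieudonné module. -/
theorem stmt_3 (p : ℕ) [Fact p.Prime] (k : Type*) [Field k] [CharP k p]
    [PerfectRing k p]
    (K : Type*) [Field K] [Algebra (WittVector p k) K]
    [IsFractionRing (WittVector p k) K]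
    (σ : K ≃+* K)
    (hσ : ∀ a : WittVector p k,
      σ (algebraMap (WittVector p k) K a) =
        algebraMap (WittVector p k) K (WittVector.frobenius a))
    {M : Type*} [AddCommGroup M] [Module K M] (b : Module.Basis (Fin 6) K M)
    (F : M →+ M)
    (hsemi : ∀ (c : K) (m : M), F (c • m) = σ c • F m)
    (h0 : F (b 0) = b 3) (h1 : F (b 1) = b 4) (h2 : F (b 2) = (p : K) • b 5)
    (h3 : F (b 3) = b 2) (h4 : F (b 4) = (p : K) • b 1)
    (h5 : F (b 5) = (p : K) • b 0) :
    {m : M | m ∈ Submodule.span K ({b 0, b 1, b 2} : Set M) ∧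
        F (F m) = (p : K) • m} =
      {m : M | ∃ α β : K, σ (σ (σ (σ α))) = α ∧ σ (σ β) = β ∧
        m = ((p : K) * α) • b 0 + β • b 1 + σ (σ α) • b 2} :=
  stmt_3_general p k K σ b F hsemi h0 h1 h2 h3 h4 h5
end

section
/- Let K be a real quadratic number field (a totally real number field with [K : ℚ] = 2) with ring of integers 𝒪_K, and let p be an odd rational prime such that p·𝒪_K is a prime ideal of 𝒪_K (p is inert in K). Let v denote the prime p·𝒪_K and K_v the v-adic completion of K. Then there exist totally positive elements a, b, c ∈ 𝒪_K (meaning φ(a) > 0, φ(b) > 0, φ(c) > 0 for every real embedding φ : K → ℝ) such that the quadratic form a·x² + b·y² + c·z² is anisotropic over K_v, i.e. a·x² + b·y² + c·z² = 0 with x, y, z ∈ K_v implies x = y = z = 0. -/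
/-! Take `a = 1`, `c = p` and `b` a totally positive integer such that `-b` is not a square
modulo `v`: lift a nonsquare of the residue field and add a large multiple of `p`. By density of
`𝒪_K` in the valuation ring of `K_v`, `-b` is still not a square modulo the maximal ideal of `K_v`,
so `x² + b y²` has even valuation `2 min (v x, v y)`, whereas `p z²` has odd valuation. -/

open IsDedekindDomain NumberField

namespace Valuation

variable {L Γ₀ : Type*} [Field L] [LinearOrderedCommGroupWithZero Γ₀] {v : Valuation L Γ₀} {B : L}

theorem map_sq_add_mul_sq (hB : ∀ t, v t ≤ 1 → v (t ^ 2 + B) = 1) (x y : L) :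
    v (x ^ 2 + B * y ^ 2) = max (v x) (v y) ^ 2 := by
  have hB1 : v B = 1 := by simpa using hB 0 (by simp)
  rcases le_or_gt (v x) (v y) with hxy | hyx
  · rcases eq_or_ne y 0 with rfl | hy
    · simp_all
    have hxy' : v (x / y) ≤ 1 := by
      rwa [map_div₀, div_le_one₀ (zero_lt_iff.mpr (v.ne_zero_iff.mpr hy))]
    have hsplit : x ^ 2 + B * y ^ 2 = y ^ 2 * ((x / y) ^ 2 + B) := by field_simp
    rw [hsplit, map_mul, hB _ hxy', max_eq_right hxy, map_pow, mul_one]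
  · rw [v.map_add_eq_of_lt_left, max_eq_left hyx.le, map_pow]
    rw [map_mul, hB1, one_mul, map_pow, map_pow]
    exact pow_lt_pow_left₀ hyx zero_le two_ne_zero

theorem eq_zero_of_sq_add_mul_sq_add_mul_sq_eq_zero (hB : ∀ t, v t ≤ 1 → v (t ^ 2 + B) = 1)
    {C : L} (hC : ∀ g : Γ₀, g ^ 2 ≠ v C) {x y z : L} (h : x ^ 2 + B * y ^ 2 + C * z ^ 2 = 0) :
    x = 0 ∧ y = 0 ∧ z = 0 := by
  have hval : max (v x) (v y) ^ 2 = v C * v z ^ 2 := by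
    rw [← map_sq_add_mul_sq hB, eq_neg_of_add_eq_zero_left h, map_neg, map_mul, map_pow]
  have hz : z = 0 := by
    by_contra hz
    have hvz : v z ≠ 0 := v.ne_zero_iff.mpr hz
    exact hC (max (v x) (v y) / v z)
      (by rw [div_pow, hval, mul_div_cancel_right₀ _ (pow_ne_zero 2 hvz)])
  have hmax : max (v x) (v y) = 0 := by simpa [hz] using hval
  exact ⟨v.zero_iff.mp (le_zero_iff.mp (hmax ▸ le_max_left _ _)),
    v.zero_iff.mp (le_zero_iff.mp (hmax ▸ le_max_right _ _)), hz⟩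

end Valuation

open scoped WithZero in
theorem WithZero.sq_ne_exp_of_odd {n : ℤ} (hn : Odd n) (g : ℤᵐ⁰) : g ^ 2 ≠ WithZero.exp n := by
  rcases eq_or_ne g 0 with rfl | hg
  · simpa using (WithZero.exp_ne_zero (a := n)).symm
  · rw [← WithZero.exp_log hg, ← WithZero.exp_nsmul, ne_eq, WithZero.exp_inj]
    rintro rfl
    exact Int.not_even_iff_odd.mpr hn ⟨g.log, by simp [two_mul]⟩

namespace IsDedekindDomain.HeightOneSpectrum

variable {R : Type*} [CommRing R] [IsDedekindDomain R] {K : Type*} [Field K] [Algebra R K]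
  [IsFractionRing R K] (v : HeightOneSpectrum R)

theorem valued_algebraMap (k : K) :
    Valued.v (algebraMap K (v.adicCompletion K) k) = v.valuation K k :=
  valuedAdicCompletion_eq_valuation' v k

theorem valued_algebraMap_algebraMap (r : R) :
    Valued.v (algebraMap K (v.adicCompletion K) (algebraMap R K r)) = v.intValuation r := by
  rw [valued_algebraMap, valuation_of_algebraMap]

theorem exists_valued_sub_algebraMap_lt_one {t : v.adicCompletion K} (ht : Valued.v t ≤ 1) :
    ∃ σ : R, Valued.v (t - algebraMap K (v.adicCompletion K) (algebraMap R K σ)) < 1 := by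
  obtain ⟨_, hu, w, rfl⟩ := mem_closure_iff_nhds.mp (denseRange_algebraMap (K := K) v t)
    {u | Valued.v (t - u) < 1}
    (Valued.mem_nhds.mpr ⟨1, fun _ h => by simpa [Valuation.map_sub_swap] using h⟩)
  have hw : v.valuation K w ≤ 1 := by
    rw [← valued_algebraMap, ← sub_sub_cancel t (algebraMap K (v.adicCompletion K) w)]
    exact (Valued.v.map_sub _ _).trans (max_le ht hu.le)
  obtain ⟨σ, hσ⟩ := exists_valuation_sub_lt_of_integer v hw 1
  refine ⟨σ, ?_⟩
  rw [← sub_add_sub_cancel t (algebraMap K (v.adicCompletion K) w)]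
  refine (Valued.v.map_add _ _).trans_lt (max_lt hu ?_)
  rw [← map_sub, valued_algebraMap, Valuation.map_sub_swap]
  simpa using hσ

theorem valued_sq_add_eq_one {b : R} (hb : ∀ σ : R, σ ^ 2 + b ∉ v.asIdeal)
    {t : v.adicCompletion K} (ht : Valued.v t ≤ 1) :
    Valued.v (t ^ 2 + algebraMap K (v.adicCompletion K) (algebraMap R K b)) = 1 := by
  obtain ⟨σ, hσ⟩ := exists_valued_sub_algebraMap_lt_one v ht
  set s := algebraMap K (v.adicCompletion K) (algebraMap R K σ)
  have hs : Valued.v (s ^ 2 + algebraMap K (v.adicCompletion K) (algebraMap R K b)) = 1 := by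
    rw [← map_pow, ← map_add, ← map_pow, ← map_add, valued_algebraMap_algebraMap,
      intValuation_eq_one_iff]
    exact hb σ
  have hts : Valued.v (t + s) ≤ 1 :=
    (Valued.v.map_add _ _).trans (max_le ht ((valued_algebraMap_algebraMap v σ).trans_le
      (v.intValuation_le_one σ)))
  have hsplit : t ^ 2 + algebraMap K (v.adicCompletion K) (algebraMap R K b) =
      (s ^ 2 + algebraMap K (v.adicCompletion K) (algebraMap R K b)) + (t - s) * (t + s) := by
    ring
  rw [hsplit, Valued.v.map_add_eq_of_lt_left, hs]
  rw [hs, map_mul]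
  exact mul_lt_one_of_lt_of_le hσ hts

end IsDedekindDomain.HeightOneSpectrum

theorem Ideal.exists_forall_sq_add_notMem {R : Type*} [CommRing R] {P : Ideal R} [P.IsMaximal]
    [Finite (R ⧸ P)] {p : ℕ} (hodd : Odd p) (hp : (p : R) ∈ P) :
    ∃ b : R, ∀ σ : R, σ ^ 2 + b ∉ P := by
  let := Ideal.Quotient.field P
  have := Fintype.ofFinite (R ⧸ P)
  have hchar : ringChar (R ⧸ P) ≠ 2 := by
    intro h2
    have : ringChar (R ⧸ P) ∣ p :=
      ringChar.dvd (by rwa [← map_natCast (Ideal.Quotient.mk P), Ideal.Quotient.eq_zero_iff_mem])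
    exact Nat.not_even_iff_odd.mpr hodd (even_iff_two_dvd.mpr (h2 ▸ this))
  obtain ⟨n, hn⟩ := FiniteField.exists_nonsquare hchar
  obtain ⟨b, hb⟩ := Ideal.Quotient.mk_surjective (-n)
  refine ⟨b, fun σ hσ => hn ⟨Ideal.Quotient.mk P σ, ?_⟩⟩
  have hσ' := Ideal.Quotient.eq_zero_iff_mem.mpr hσ
  rw [map_add, map_pow, hb] at hσ'
  linear_combination -hσ'

theorem NumberField.exists_nat_forall_pos_add_mul {K : Type*} [Field K] [NumberField K] (x : K)
    {m : ℕ} (hm : 0 < m) : ∃ N : ℕ, ∀ φ : K →+* ℝ, 0 < φ (x + m * N) := by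
  obtain ⟨M, hM⟩ := (Set.finite_range fun φ : K →+* ℝ => -φ x).bddAbove
  obtain ⟨N, hN⟩ := exists_nat_gt M
  refine ⟨N, fun φ => ?_⟩
  have hφ : -φ x ≤ M := hM ⟨φ, rfl⟩
  have hmN : (N : ℝ) ≤ m * N := le_mul_of_one_le_left (Nat.cast_nonneg _) (Nat.one_le_cast.mpr hm)
  rw [map_add, map_mul, map_natCast, map_natCast]
  linarith

open HeightOneSpectrum in
theorem stmt_6_general (K : Type*) [Field K] [NumberField K]
    (p : ℕ) (hodd : Odd p)
    (v : HeightOneSpectrum (𝓞 K))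
    (hv : v.asIdeal = Ideal.span {(p : 𝓞 K)}) :
    ∃ a b c : 𝓞 K,
      (∀ φ : K →+* ℝ, 0 < φ (a : K)) ∧
      (∀ φ : K →+* ℝ, 0 < φ (b : K)) ∧
      (∀ φ : K →+* ℝ, 0 < φ (c : K)) ∧
      ∀ x y z : v.adicCompletion K,
        algebraMap K (v.adicCompletion K) (a : K) * x ^ 2 +
            algebraMap K (v.adicCompletion K) (b : K) * y ^ 2 +
            algebraMap K (v.adicCompletion K) (c : K) * z ^ 2 = 0 →
          x = 0 ∧ y = 0 ∧ z = 0 := by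
  have hpv : (p : 𝓞 K) ∈ v.asIdeal := hv ▸ Ideal.mem_span_singleton_self _
  obtain ⟨b₀, hb₀⟩ := Ideal.exists_forall_sq_add_notMem hodd hpv
  obtain ⟨N, hN⟩ := exists_nat_forall_pos_add_mul (b₀ : K) hodd.pos
  have hb : ∀ σ : 𝓞 K, σ ^ 2 + (b₀ + p * N) ∉ v.asIdeal := fun σ h => hb₀ σ <|
    (v.asIdeal.add_mem_iff_left (v.asIdeal.mul_mem_right _ hpv)).mp (by rwa [← add_assoc] at h)
  have hvp : Valued.v (algebraMap K (v.adicCompletion K) ((p : 𝓞 K) : K)) = WithZero.exp (-1) := by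
    rw [valued_algebraMap_algebraMap, intValuation_singleton _ (by exact_mod_cast hodd.pos.ne') hv]
  refine ⟨1, b₀ + p * N, p, fun φ => by simp, fun φ => by simpa using hN φ,
    fun φ => by simpa using hodd.pos, fun x y z h => ?_⟩
  refine Valuation.eq_zero_of_sq_add_mul_sq_add_mul_sq_eq_zero (fun _ => valued_sq_add_eq_one v hb)
    (hvp ▸ WithZero.sq_ne_exp_of_odd odd_neg_one) ?_
  simpa using h

/-- for a real quadratic field `K` and an odd prime `p` inert in
`K`, there are totally positive integers `a, b, c` such that
`a·x² + b·y² + c·z²` is anisotropic over the `v`-adic completion of `K` at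
`v = p·𝒪_K`. -/
theorem stmt_6 (K : Type*) [Field K] [NumberField K]
    (htr : ∀ (φ : K →+* ℂ) (x : K), (φ x).im = 0)
    (hdeg : Module.finrank ℚ K = 2)
    (p : ℕ) (hp : p.Prime) (hodd : Odd p)
    (v : HeightOneSpectrum (𝓞 K))
    (hv : v.asIdeal = Ideal.span {(p : 𝓞 K)}) :
    ∃ a b c : 𝓞 K,
      (∀ φ : K →+* ℝ, 0 < φ (a : K)) ∧
      (∀ φ : K →+* ℝ, 0 < φ (b : K)) ∧
      (∀ φ : K →+* ℝ, 0 < φ (c : K)) ∧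
      ∀ x y z : v.adicCompletion K,
        algebraMap K (v.adicCompletion K) (a : K) * x ^ 2 +
            algebraMap K (v.adicCompletion K) (b : K) * y ^ 2 +
            algebraMap K (v.adicCompletion K) (c : K) * z ^ 2 = 0 →
          x = 0 ∧ y = 0 ∧ z = 0 :=
  stmt_6_general K p hodd v hv
end

section
/- Let K be a real quadratic number field and let a, b ∈ K satisfy φ(a) < 0 and φ(b) < 0 for every real embedding φ : K → ℝ. Let D be the quaternion algebra over K with K-basis 1, i, j, k and multiplication determined by i² = a, j² = b, i·j = −j·i = k. Let F be a totally real number field. Then there is no unital ℚ-algebra homomorphism from D to the algebra Mat₂(F) of 2×2 matrices over F. -/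
open Quaternion

lemma toRealEmb {K : Type*} [Field K]
    (htr : ∀ (φ : K →+* ℂ) (x : K), (φ x).im = 0) (ψ : K →+* ℂ) :
    ∃ φ : K →+* ℝ, ∀ x, (φ x : ℂ) = ψ x := by
  have hre : NumberField.ComplexEmbedding.IsReal ψ := by
    rw [NumberField.ComplexEmbedding.isReal_iff]
    ext x
    have h := htr ψ x
    apply Complex.ext <;>
      simp [Complex.conj_re, Complex.conj_im, h]
  exact ⟨hre.embedding, fun x => hre.coe_embedding_apply x⟩

lemma exists_real_emb_of_root {K : Type*} [Field K] [NumberField K]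
    (htr : ∀ (φ : K →+* ℂ) (x : K), (φ x).im = 0) (a : K) (α : ℝ)
    (hroot : Polynomial.aeval α (minpoly ℚ a) = 0) :
    ∃ φ : K →+* ℝ, φ a = α := by
  have hint : IsIntegral ℚ a := Algebra.IsIntegral.isIntegral a
  have hmem : (α : ℂ) ∈ (minpoly ℚ a).rootSet ℂ := by
    rw [Polynomial.mem_rootSet]
    refine ⟨minpoly.ne_zero hint, ?_⟩
    have h1 : Polynomial.aeval ((algebraMap ℝ ℂ) α) (minpoly ℚ a)
        = (IsScalarTower.toAlgHom ℚ ℝ ℂ) (Polynomial.aeval α (minpoly ℚ a)) :=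
      Polynomial.aeval_algHom_apply (IsScalarTower.toAlgHom ℚ ℝ ℂ) α (minpoly ℚ a)
    simpa [hroot] using h1
  rw [← NumberField.Embeddings.range_eval_eq_rootSet_minpoly K ℂ a] at hmem
  obtain ⟨ψ, hψ⟩ := hmem
  obtain ⟨φ, hφ⟩ := toRealEmb htr ψ
  refine ⟨φ, ?_⟩
  have h2 : ((φ a : ℂ)) = (α : ℂ) := by rw [hφ a]; exact hψ
  exact_mod_cast h2

lemma quat_matrix_aux (X Y X' Y' A B : Matrix (Fin 2) (Fin 2) ℝ)
    (hXX : X * X = A) (hYY : Y * Y = B) (hYX : Y * X = -(X * Y))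
    (hXi : X * X' = 1) (hXi' : X' * X = 1) (hYj : Y * Y' = 1) (hYj' : Y' * Y = 1) :
    ∃ α β : ℝ, A = algebraMap ℝ (Matrix (Fin 2) (Fin 2) ℝ) α ∧
      B = algebraMap ℝ (Matrix (Fin 2) (Fin 2) ℝ) β ∧ ¬(α < 0 ∧ β < 0) := by
  have htX : Matrix.trace X = 0 := by
    have h1 : -X = Y * X * Y' := by rw [hYX, neg_mul, mul_assoc, hYj, mul_one]
    have h2 : Matrix.trace (Y * X * Y') = Matrix.trace X := by
      rw [Matrix.trace_mul_comm (Y * X) Y', ← mul_assoc, hYj', one_mul]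
    have h3 := h2.symm.trans (congrArg Matrix.trace h1.symm)
    rw [Matrix.trace_neg] at h3
    linarith
  have htY : Matrix.trace Y = 0 := by
    have hXY : X * Y = -(Y * X) := by rw [hYX, neg_neg]
    have h1 : -Y = X * Y * X' := by rw [hXY, neg_mul, mul_assoc, hXi, mul_one]
    have h2 : Matrix.trace (X * Y * X') = Matrix.trace Y := by
      rw [Matrix.trace_mul_comm (X * Y) X', ← mul_assoc, hXi', one_mul]
    have h3 := h2.symm.trans (congrArg Matrix.trace h1.symm)
    rw [Matrix.trace_neg] at h3
    linarith
  rw [Matrix.trace_fin_two] at htX htY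
  refine ⟨X 0 0 * X 0 0 + X 0 1 * X 1 0, Y 0 0 * Y 0 0 + Y 0 1 * Y 1 0, ?_, ?_, ?_⟩
  · rw [← hXX]
    ext i j
    fin_cases i <;> fin_cases j <;>
      simp only [Matrix.mul_apply, Fin.sum_univ_two, Matrix.algebraMap_matrix_apply] <;>
      norm_num
    · linear_combination (X 0 1) * htX
    · linear_combination (X 1 0) * htX
    · linear_combination (X 1 1 - X 0 0) * htX
  · rw [← hYY]
    ext i j
    fin_cases i <;> fin_cases j <;>
      simp only [Matrix.mul_apply, Fin.sum_univ_two, Matrix.algebraMap_matrix_apply] <;>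
      norm_num
    · linear_combination (Y 0 1) * htY
    · linear_combination (Y 1 0) * htY
    · linear_combination (Y 1 1 - Y 0 0) * htY
  · rintro ⟨hα, hβ⟩
    set p := X 0 0; set q := X 0 1; set r := X 1 0
    set s := Y 0 0; set t := Y 0 1; set u := Y 1 0
    set α := p * p + q * r with hαdef
    set β := s * s + t * u with hβdef
    have e3 : 2 * (p * s) + q * u + r * t = 0 := by
      have h4 := congrFun (congrFun hYX 0) 0
      simp only [Matrix.mul_apply, Fin.sum_univ_two, Matrix.neg_apply] at h4
      linarith
    set x := t - u with hxdef
    set y := r - q with hydef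
    have h4 : x * r + y * u = x * q + y * t := by rw [hxdef, hydef]; ring
    have h5 : α * x ^ 2 + β * y ^ 2 = (x * p + y * s) ^ 2 + (x * q + y * t) * (x * r + y * u) := by
      linear_combination (-(x ^ 2)) * hαdef.symm + (-(y ^ 2)) * hβdef.symm + (-(x * y)) * e3
    have key : α * x ^ 2 + β * y ^ 2 = (x * p + y * s) ^ 2 + (x * q + y * t) ^ 2 := by
      rw [h5, h4]; ring
    have hge : 0 ≤ α * x ^ 2 + β * y ^ 2 := by rw [key]; positivity
    have hy : y = 0 := by
      by_contra hc
      have h6 : 0 < y ^ 2 := by positivity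
      nlinarith [sq_nonneg x]
    have hru : r = q := by rw [hydef] at hy; linarith
    have e1 : p * p + q * q = α := by rw [hαdef, hru]
    nlinarith [sq_nonneg p, sq_nonneg q]

/-- a quaternion algebra over a real quadratic field which is
definite at both real places does not embed (as a unital `ℚ`-algebra) into
`Mat₂(F)` for a totally real number field `F`. -/
theorem stmt_7 (K : Type*) [Field K] [NumberField K]
    (htrK : ∀ (φ : K →+* ℂ) (x : K), (φ x).im = 0)
    (hdeg : Module.finrank ℚ K = 2)
    (a b : K) (ha : ∀ φ : K →+* ℝ, φ a < 0) (hb : ∀ φ : K →+* ℝ, φ b < 0)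
    (F : Type*) [Field F] [NumberField F]
    (htrF : ∀ (φ : F →+* ℂ) (x : F), (φ x).im = 0) :
    IsEmpty (ℍ[K, a, b] →ₐ[ℚ] Matrix (Fin 2) (Fin 2) F) := by
  constructor
  intro f
  -- a and b are nonzero
  obtain ⟨ψK⟩ : Nonempty (K →+* ℂ) := inferInstance
  obtain ⟨φ₀, -⟩ := toRealEmb htrK ψK
  have ha0 : a ≠ 0 := fun hh => by simpa [hh] using ha φ₀
  have hb0 : b ≠ 0 := fun hh => by simpa [hh] using hb φ₀
  -- a real embedding of F, and the induced map to real matrices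
  obtain ⟨ψF⟩ : Nonempty (F →+* ℂ) := inferInstance
  obtain ⟨ρ, -⟩ := toRealEmb htrF ψF
  let g : ℍ[K, a, b] →ₐ[ℚ] Matrix (Fin 2) (Fin 2) ℝ := (ρ.toRatAlgHom.mapMatrix).comp f
  let h : K →ₐ[ℚ] Matrix (Fin 2) (Fin 2) ℝ :=
    g.comp (IsScalarTower.toAlgHom ℚ K ℍ[K, a, b])
  have hcoe : ∀ c : K, g (algebraMap K ℍ[K, a, b] c) = h c := fun c => rfl
  -- quaternion generators and inverses
  have hii : (⟨0,1,0,0⟩ : ℍ[K,a,b]) * ⟨0,1,0,0⟩ = algebraMap K ℍ[K,a,b] a := by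
    ext <;> simp [QuaternionAlgebra.algebraMap_eq]
  have hjj : (⟨0,0,1,0⟩ : ℍ[K,a,b]) * ⟨0,0,1,0⟩ = algebraMap K ℍ[K,a,b] b := by
    ext <;> simp [QuaternionAlgebra.algebraMap_eq]
  have hanti : (⟨0,0,1,0⟩ : ℍ[K,a,b]) * ⟨0,1,0,0⟩ = -((⟨0,1,0,0⟩ : ℍ[K,a,b]) * ⟨0,0,1,0⟩) := by
    ext <;> simp
  have hiinv : (⟨0,1,0,0⟩ : ℍ[K,a,b]) * ⟨0,a⁻¹,0,0⟩ = 1 ∧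
      (⟨0,a⁻¹,0,0⟩ : ℍ[K,a,b]) * ⟨0,1,0,0⟩ = 1 := by
    constructor <;> (ext <;> simp <;> field_simp)
  have hjinv : (⟨0,0,1,0⟩ : ℍ[K,a,b]) * ⟨0,0,b⁻¹,0⟩ = 1 ∧
      (⟨0,0,b⁻¹,0⟩ : ℍ[K,a,b]) * ⟨0,0,1,0⟩ = 1 := by
    constructor <;> (ext <;> simp <;> field_simp)
  -- apply the matrix lemma
  obtain ⟨α, β, hscalX, hscalY, hnotneg⟩ :=
    quat_matrix_aux (g ⟨0,1,0,0⟩) (g ⟨0,0,1,0⟩) (g ⟨0,a⁻¹,0,0⟩) (g ⟨0,0,b⁻¹,0⟩) (h a) (h b)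
      (by rw [← map_mul, hii, hcoe]) (by rw [← map_mul, hjj, hcoe])
      (by rw [← map_mul, ← map_mul, hanti, map_neg])
      (by rw [← map_mul, hiinv.1, map_one]) (by rw [← map_mul, hiinv.2, map_one])
      (by rw [← map_mul, hjinv.1, map_one]) (by rw [← map_mul, hjinv.2, map_one])
  -- α and β are roots of the minimal polynomials of a and b
  have hroot : ∀ (c : K) (γ : ℝ), h c = algebraMap ℝ (Matrix (Fin 2) (Fin 2) ℝ) γ →
      Polynomial.aeval γ (minpoly ℚ c) = 0 := by
    intro c γ hc
    have h0 : Polynomial.aeval (h c) (minpoly ℚ c) = 0 := by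
      rw [Polynomial.aeval_algHom_apply h c, minpoly.aeval, map_zero]
    rw [hc] at h0
    have h1 : Polynomial.aeval ((algebraMap ℝ (Matrix (Fin 2) (Fin 2) ℝ)) γ) (minpoly ℚ c)
        = (IsScalarTower.toAlgHom ℚ ℝ (Matrix (Fin 2) (Fin 2) ℝ))
            (Polynomial.aeval γ (minpoly ℚ c)) :=
      Polynomial.aeval_algHom_apply (IsScalarTower.toAlgHom ℚ ℝ (Matrix (Fin 2) (Fin 2) ℝ)) γ
        (minpoly ℚ c)
    have h2 : (algebraMap ℝ (Matrix (Fin 2) (Fin 2) ℝ)) (Polynomial.aeval γ (minpoly ℚ c)) = 0 := by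
      have h3 := h1.symm.trans h0
      simpa using h3
    exact (algebraMap ℝ (Matrix (Fin 2) (Fin 2) ℝ)).injective
      (h2.trans (map_zero (algebraMap ℝ (Matrix (Fin 2) (Fin 2) ℝ))).symm)
  obtain ⟨φa, hφa⟩ := exists_real_emb_of_root htrK a α (hroot a α hscalX)
  obtain ⟨φb, hφb⟩ := exists_real_emb_of_root htrK b β (hroot b β hscalY)
  exact hnotneg ⟨hφa ▸ ha φa, hφb ▸ hb φb⟩
end
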